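/- arXiv:1507.00750 — 3 statements merged into one kernel-verified Lean document; each statement's English description precedes it below -/
import Mathlib

section
/- Let x₀ ∈ ℝ, δ' > 0, and let f : ℂ → ℂ be complex-differentiable on the open ball B(x₀, δ') ⊆ ℂ, with f(x) ∈ ℝ for every real x ∈ B(x₀, δ'), f(x₀) = 0, and f'(x₀) a negative real number. Then there exists δ with 0 < δ ≤ δ' such that for every z ∈ B(x₀, δ): if Im z > 0 then Im f(z) < 0, and if Im z < 0 then Im f(z) > 0. -/
/-!
Along a vertical line `t ↦ a + t i` the chain rule gives `d/dt Im f(a + t i) = Re f'(a + t i)`.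
Near `x₀` the real part of `f'` stays negative, so `Im f` strictly decreases along every vertical
segment of a small ball; it vanishes on the real axis, hence is negative above it and positive
below it.
-/

open Complex Metric

namespace Complex

theorem hasDerivAt_im_comp_add_mul_I {f : ℂ → ℂ} {f' a : ℂ} {t : ℝ}
    (hf : HasDerivAt f f' (a + t * I)) :
    HasDerivAt (fun s : ℝ => (f (a + s * I)).im) f'.re t := by
  have hline : HasDerivAt (fun s : ℝ => a + s * I) I t := by
    simpa using (ofRealCLM.hasDerivAt (x := t)).mul_const I |>.const_add a
  have hcomp : HasDerivAt (fun s : ℝ => f (a + s * I)) (I * f') t := by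
    simpa [Function.comp_def] using (hf.hasFDerivAt.restrictScalars ℝ).comp_hasDerivAt t hline
  simpa [Function.comp_def, mul_im] using imCLM.hasFDerivAt.comp_hasDerivAt t hcomp

theorem strictAntiOn_im_comp_add_mul_I {f : ℂ → ℂ} {s : Set ℂ} (hs : Convex ℝ s)
    (hso : IsOpen s) (hf : DifferentiableOn ℂ f s) (hneg : ∀ w ∈ s, (deriv f w).re < 0)
    (a : ℂ) : StrictAntiOn (fun t : ℝ => (f (a + t * I)).im) {t : ℝ | a + t * I ∈ s} := by
  have hline : Continuous fun t : ℝ => a + t * I := by fun_prop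
  have hderiv : ∀ t ∈ {t : ℝ | a + t * I ∈ s},
      HasDerivAt (fun s : ℝ => (f (a + s * I)).im) (deriv f (a + t * I)).re t :=
    fun t ht => hasDerivAt_im_comp_add_mul_I (hf.differentiableAt (hso.mem_nhds ht)).hasDerivAt
  have hopen : IsOpen {t : ℝ | a + t * I ∈ s} := hso.preimage hline
  have hconvex : Convex ℝ {t : ℝ | a + t * I ∈ s} := by
    intro t ht u hu μ ν hμ hν hμν
    have hcomb := hs ht hu hμ hν hμν
    simp only [Set.mem_ofPred_eq, real_smul, smul_eq_mul, ofReal_add, ofReal_mul] at hcomb ⊢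
    convert hcomb using 1
    linear_combination (-a) * (by exact_mod_cast hμν : (μ : ℂ) + ν = 1)
  refine strictAntiOn_of_deriv_neg hconvex
    (fun t ht => (hderiv t ht).continuousAt.continuousWithinAt) fun t ht => ?_
  rw [hopen.interior_eq] at ht
  rw [(hderiv t ht).deriv]
  exact hneg _ ht

theorem ofReal_re_mem_ball {x r : ℝ} {z : ℂ} (hz : z ∈ ball (x : ℂ) r) :
    (z.re : ℂ) ∈ ball (x : ℂ) r := by
  rw [mem_ball, dist_eq] at hz ⊢
  rw [← ofReal_sub, norm_real, Real.norm_eq_abs]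
  simpa using (abs_re_le_norm (z - x)).trans_lt hz

end Complex

theorem stmt_1_general (x₀ δ' : ℝ) (hδ' : 0 < δ') (f : ℂ → ℂ)
    (hf : DifferentiableOn ℂ f (ball (x₀ : ℂ) δ'))
    (hreal : ∀ x : ℝ, (x : ℂ) ∈ ball (x₀ : ℂ) δ' → (f x).im = 0)
    (hderiv_neg : (deriv f x₀).re < 0) :
    ∃ δ : ℝ, 0 < δ ∧ δ ≤ δ' ∧ ∀ z ∈ ball (x₀ : ℂ) δ,
      (0 < z.im → (f z).im < 0) ∧ (z.im < 0 → 0 < (f z).im) := by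
  have hderiv_cont : ContinuousAt (deriv f) x₀ :=
    (hf.analyticOnNhd isOpen_ball).deriv.continuousOn.continuousAt
      (isOpen_ball.mem_nhds (mem_ball_self hδ'))
  obtain ⟨δ₀, hδ₀, hneg⟩ := eventually_nhds_iff_ball.mp <|
    (continuous_re.continuousAt.comp hderiv_cont).eventually_lt continuousAt_const hderiv_neg
  set δ := min δ₀ δ'
  have hanti := strictAntiOn_im_comp_add_mul_I (convex_ball (x₀ : ℂ) δ) isOpen_ball
    (hf.mono (ball_subset_ball (min_le_right _ _)))
    (fun w hw => hneg w (ball_subset_ball (min_le_left _ _) hw))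
  refine ⟨δ, lt_min hδ₀ hδ', min_le_right _ _, fun z hz => ?_⟩
  have hre_mem := ofReal_re_mem_ball hz
  have h0 : (0 : ℝ) ∈ {t : ℝ | (z.re : ℂ) + t * I ∈ ball (x₀ : ℂ) δ} := by simpa using hre_mem
  have him : z.im ∈ {t : ℝ | (z.re : ℂ) + t * I ∈ ball (x₀ : ℂ) δ} := by simpa [re_add_im] using hz
  have hf_re : (f z.re).im = 0 := hreal _ (ball_subset_ball (min_le_right _ _) hre_mem)
  constructor
  · intro hy
    simpa [re_add_im, hf_re] using hanti z.re h0 him hy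
  · intro hy
    simpa [re_add_im, hf_re] using hanti z.re him h0 hy

/-- If `f` is complex-differentiable on the ball `B(x₀, δ')` centered at a
real point, real-valued on the real points of that ball, vanishes at `x₀`, and has a negative
real derivative there, then on some smaller ball it maps the upper half-plane into the lower
half-plane and the lower half-plane into the upper half-plane. -/
theorem stmt_1 (x₀ δ' : ℝ) (hδ' : 0 < δ') (f : ℂ → ℂ)
    (hf : DifferentiableOn ℂ f (ball (x₀ : ℂ) δ'))
    (hreal : ∀ x : ℝ, (x : ℂ) ∈ ball (x₀ : ℂ) δ' → (f x).im = 0)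
    (h0 : f x₀ = 0)
    (hderiv_re : (deriv f x₀).im = 0) (hderiv_neg : (deriv f x₀).re < 0) :
    ∃ δ : ℝ, 0 < δ ∧ δ ≤ δ' ∧ ∀ z ∈ ball (x₀ : ℂ) δ,
      (0 < z.im → (f z).im < 0) ∧ (z.im < 0 → 0 < (f z).im) :=
  stmt_1_general x₀ δ' hδ' f hf hreal hderiv_neg
end

section
/- There exists a function Ĝ : ℂ → ℂ, complex-differentiable on the open ball B(1,1), with Ĝ(x) ∈ ℝ for every real x ∈ B(1,1), such that φ_←(z) = (4/3)·(z−1)^{3/2}·(1 + (z−1)·Ĝ(z)) for every z ∈ B(1,1) with z ∉ (−∞,1]. -/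
open Complex Metric

/-- `φ_←(z) = 2(z−1)·∫_0^1 (t(z−1))^{1/2}·(1+t(z−1))^{−1/2} dt`, the integral of
`2(s−1)^{1/2} s^{−1/2}` over the straight segment from `1` to `z` (principal powers). -/
noncomputable def phiLeft (z : ℂ) : ℂ :=
  2 * (z - 1) *
    ∫ t in (0:ℝ)..1, ((t : ℂ) * (z - 1)) ^ ((1 : ℂ)/2) * (1 + (t : ℂ) * (z - 1)) ^ (-((1 : ℂ)/2))

/-! Since `(t w)^{1/2} = t^{1/2} w^{1/2}` for `t ≥ 0`, substituting `w = z - 1` gives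
`φ_←(z) = 2 (z-1)^{3/2} F(z-1)` on the whole ball, where `F(w) = ∫_0^1 t^{1/2} (1+tw)^{-1/2} dt`.
Differentiating under the integral sign shows `F` is holomorphic on `‖w‖ < 1`; it is real for
real `w ≥ -1` and `F(0) = 2/3`. So `Ĝ = dslope (3/2 F(· - 1) - 1) 1` works; it is real at `z = 1`
because it is continuous there and real at the nearby real points. -/

open Set Filter MeasureTheory
open scoped Topology Interval

namespace Complex

theorem ofReal_mul_cpow_of_nonneg {t : ℝ} (ht : 0 ≤ t) (w c : ℂ) :
    ((t : ℂ) * w) ^ c = (t : ℂ) ^ c * w ^ c := by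
  rcases eq_or_ne c 0 with rfl | hc
  · simp
  rcases ht.eq_or_lt with rfl | ht
  · simp [zero_cpow hc]
  rcases eq_or_ne w 0 with rfl | hw
  · simp [zero_cpow hc]
  have ht' : (t : ℂ) ≠ 0 := ofReal_ne_zero.mpr ht.ne'
  rw [cpow_def_of_ne_zero (mul_ne_zero ht' hw), log_ofReal_mul ht hw, ofReal_log ht.le,
    add_mul, exp_add, ← cpow_def_of_ne_zero ht', ← cpow_def_of_ne_zero hw]

theorem cpow_three_div_two (w : ℂ) : w ^ ((3 : ℂ) / 2) = w * w ^ ((1 : ℂ) / 2) := by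
  rcases eq_or_ne w 0 with rfl | hw
  · simp
  rw [show (3 : ℂ) / 2 = 1 + 1 / 2 by norm_num, cpow_add _ _ hw, cpow_one]

theorem im_eq_zero_of_continuousAt_of_nhdsNE {f : ℂ → ℂ} {x : ℝ} (hf : ContinuousAt f x)
    (h : ∀ᶠ y : ℝ in 𝓝[≠] x, (f y).im = 0) : (f x).im = 0 := by
  have hlim : Tendsto (fun y : ℝ => (f y).im) (𝓝[≠] x) (𝓝 (f x).im) :=
    (continuous_im.continuousAt.comp (hf.comp continuous_ofReal.continuousAt)).tendsto.mono_left
      nhdsWithin_le_nhds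
  exact tendsto_nhds_unique hlim (tendsto_const_nhds.congr' (h.mono fun _ hy => hy.symm))

theorem dslope_ofReal_im_eq_zero {g : ℂ → ℂ} {c r : ℝ}
    (hg : DifferentiableOn ℂ g (ball (c : ℂ) r))
    (hg_real : ∀ x : ℝ, (x : ℂ) ∈ ball (c : ℂ) r → (g x).im = 0)
    {x : ℝ} (hx : (x : ℂ) ∈ ball (c : ℂ) r) : (dslope g c x).im = 0 := by
  have slope_real : ∀ y : ℝ, (y : ℂ) ∈ ball (c : ℂ) r → y ≠ c → (dslope g c y).im = 0 := by
    intro y hy hyc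
    have hc : (c : ℂ) ∈ ball (c : ℂ) r := mem_ball_self (pos_of_mem_ball hy)
    rw [dslope_of_ne _ (by exact_mod_cast hyc), slope_def_field]
    simp [div_im, hg_real y hy, hg_real c hc]
  rcases eq_or_ne x c with rfl | hxc
  · have hcont : ContinuousAt (dslope g x) x :=
      ((differentiableOn_dslope (isOpen_ball.mem_nhds hx)).2 hg).continuousOn.continuousAt
        (isOpen_ball.mem_nhds hx)
    refine im_eq_zero_of_continuousAt_of_nhdsNE hcont ?_
    have hball : ∀ᶠ y : ℝ in 𝓝 x, (y : ℂ) ∈ ball (x : ℂ) r :=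
      continuous_ofReal.continuousAt.preimage_mem_nhds (isOpen_ball.mem_nhds hx)
    filter_upwards [nhdsWithin_le_nhds hball, self_mem_nhdsWithin] with y hy hyx
    exact slope_real y hy hyx
  · exact slope_real x hx hxc

end Complex

noncomputable def halfPowIntegrand (w : ℂ) (t : ℝ) : ℂ :=
  (t : ℂ) ^ ((1 : ℂ) / 2) * (1 + t * w) ^ (-((1 : ℂ) / 2))

noncomputable def halfPowIntegral (w : ℂ) : ℂ :=
  ∫ t in (0:ℝ)..1, halfPowIntegrand w t

theorem phiLeft_eq (z : ℂ) :
    phiLeft z = 2 * (z - 1) ^ ((3 : ℂ) / 2) * halfPowIntegral (z - 1) := by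
  have hfactor : ∀ t ∈ [[(0:ℝ), 1]],
      ((t : ℂ) * (z - 1)) ^ ((1 : ℂ) / 2) * (1 + t * (z - 1)) ^ (-((1 : ℂ) / 2))
        = (z - 1) ^ ((1 : ℂ) / 2) * halfPowIntegrand (z - 1) t := by
    intro t ht
    rw [uIcc_of_le zero_le_one] at ht
    rw [ofReal_mul_cpow_of_nonneg ht.1, halfPowIntegrand]
    ring
  rw [phiLeft, intervalIntegral.integral_congr hfactor, intervalIntegral.integral_const_mul,
    cpow_three_div_two, halfPowIntegral]
  ring

theorem halfPowIntegral_zero : halfPowIntegral 0 = 2 / 3 := by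
  simp only [halfPowIntegral, halfPowIntegrand, mul_zero, add_zero, one_cpow, mul_one]
  rw [integral_cpow (Or.inl (by norm_num))]
  norm_num

theorem halfPowIntegral_ofReal_im {x : ℝ} (hx : -1 ≤ x) : (halfPowIntegral x).im = 0 := by
  have hreal : ∀ t ∈ [[(0:ℝ), 1]], halfPowIntegrand x t
      = ((t ^ (1 / 2 : ℝ) * (1 + t * x) ^ (-(1 / 2) : ℝ) : ℝ) : ℂ) := by
    intro t ht
    rw [uIcc_of_le zero_le_one] at ht
    have hbase : 0 ≤ 1 + t * x := by nlinarith [ht.1, ht.2]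
    push_cast [halfPowIntegrand, ofReal_cpow ht.1, ofReal_cpow hbase]
    norm_num
  rw [halfPowIntegral, intervalIntegral.integral_congr hreal, intervalIntegral.integral_ofReal,
    ofReal_im]

section Holomorphy

variable {t : ℝ} {w : ℂ}

theorem norm_ofReal_mul_le (ht : t ∈ Icc (0:ℝ) 1) : ‖(t : ℂ) * w‖ ≤ ‖w‖ := by
  rw [norm_mul, norm_real, Real.norm_of_nonneg ht.1]
  exact mul_le_of_le_one_left (norm_nonneg w) ht.2

theorem one_add_ofReal_mul_mem_slitPlane (ht : t ∈ Icc (0:ℝ) 1) (hw : ‖w‖ < 1) :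
    1 + (t : ℂ) * w ∈ slitPlane :=
  mem_slitPlane_of_norm_lt_one ((norm_ofReal_mul_le ht).trans_lt hw)

theorem one_sub_norm_le_norm_one_add_ofReal_mul (ht : t ∈ Icc (0:ℝ) 1) :
    1 - ‖w‖ ≤ ‖1 + (t : ℂ) * w‖ := by
  have := norm_sub_norm_le (1 : ℂ) (-((t : ℂ) * w))
  rw [norm_one, norm_neg, sub_neg_eq_add] at this
  linarith [norm_ofReal_mul_le (w := w) ht]

theorem continuousOn_halfPowIntegrand (hw : ‖w‖ < 1) :
    ContinuousOn (halfPowIntegrand w) (Icc 0 1) := fun t ht =>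
  ((continuousAt_ofReal_cpow_const t _ (Or.inl (by norm_num))).mul
    ((by fun_prop : ContinuousAt (fun t : ℝ => 1 + (t : ℂ) * w) t).cpow continuousAt_const
      (one_add_ofReal_mul_mem_slitPlane ht hw))).continuousWithinAt

theorem hasDerivAt_halfPowIntegrand (ht : t ∈ Icc (0:ℝ) 1) (hw : ‖w‖ < 1) :
    HasDerivAt (halfPowIntegrand · t)
      ((t : ℂ) ^ ((1 : ℂ) / 2) * (-((1 : ℂ) / 2) * (1 + t * w) ^ (-((1 : ℂ) / 2) - 1) * t)) w :=
  ((((hasDerivAt_id w).const_mul (t : ℂ)).const_add 1).cpow_const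
    (one_add_ofReal_mul_mem_slitPlane ht hw)).const_mul _ |>.congr_deriv (by simp)

theorem norm_deriv_halfPowIntegrand_le {R : ℝ} (ht : t ∈ Icc (0:ℝ) 1) (hwR : ‖w‖ ≤ R)
    (hR : R < 1) :
    ‖(t : ℂ) ^ ((1 : ℂ) / 2) * (-((1 : ℂ) / 2) * (1 + t * w) ^ (-((1 : ℂ) / 2) - 1) * t)‖
      ≤ (1 - R) ^ (-(3 / 2) : ℝ) := by
  have hbase : 1 - R ≤ ‖1 + (t : ℂ) * w‖ := by
    linarith [one_sub_norm_le_norm_one_add_ofReal_mul (w := w) ht]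
  have ht_norm : ‖(t : ℂ)‖ ≤ 1 := by rw [norm_real, Real.norm_of_nonneg ht.1]; exact ht.2
  have ht_half : ‖(t : ℂ) ^ ((1 : ℂ) / 2)‖ ≤ 1 := by
    rw [show (1 : ℂ) / 2 = ((1 / 2 : ℝ) : ℂ) by push_cast; rfl, norm_cpow_real]
    exact Real.rpow_le_one (norm_nonneg _) ht_norm (by norm_num)
  have hpow : ‖(1 + (t : ℂ) * w) ^ (-((1 : ℂ) / 2) - 1)‖ ≤ (1 - R) ^ (-(3 / 2) : ℝ) := by
    rw [show -((1 : ℂ) / 2) - 1 = ((-(3 / 2) : ℝ) : ℂ) by push_cast; ring, norm_cpow_real]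
    exact Real.rpow_le_rpow_of_nonpos (by linarith) hbase (by norm_num)
  calc _ = ‖(t : ℂ) ^ ((1 : ℂ) / 2)‖ * (1 / 2 * ‖(1 + (t : ℂ) * w) ^ (-((1 : ℂ) / 2) - 1)‖
          * ‖(t : ℂ)‖) := by simp
    _ ≤ 1 * (1 / 2 * (1 - R) ^ (-(3 / 2) : ℝ) * 1) := by gcongr
    _ ≤ (1 - R) ^ (-(3 / 2) : ℝ) := by
        have := Real.rpow_nonneg (by linarith : (0:ℝ) ≤ 1 - R) (-(3 / 2) : ℝ)
        linarith

theorem differentiableOn_halfPowIntegral : DifferentiableOn ℂ halfPowIntegral (ball 0 1) := by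
  intro w₀ hw₀
  rw [mem_ball_zero_iff] at hw₀
  obtain ⟨R, hw₀R, hR⟩ := exists_between hw₀
  have hIoc : Ι (0:ℝ) 1 ⊆ Icc 0 1 := by
    rw [uIoc_of_le zero_le_one]; exact Ioc_subset_Icc_self
  have hderiv := intervalIntegral.hasDerivAt_integral_of_dominated_loc_of_deriv_le
    (bound := fun _ => (1 - R) ^ (-(3 / 2) : ℝ)) (isOpen_ball.mem_nhds (mem_ball_zero_iff.2 hw₀R))
    (Eventually.of_forall fun w =>
      (by unfold halfPowIntegrand; fun_prop : Measurable _).aestronglyMeasurable)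
    ((continuousOn_halfPowIntegrand hw₀).intervalIntegrable_of_Icc zero_le_one)
    (by fun_prop : Measurable _).aestronglyMeasurable
    (Eventually.of_forall fun t ht w (hw : w ∈ ball 0 R) =>
      norm_deriv_halfPowIntegrand_le (hIoc ht) (mem_ball_zero_iff.1 hw).le hR)
    (intervalIntegrable_const (μ := volume))
    (Eventually.of_forall fun t ht w (hw : w ∈ ball 0 R) =>
      hasDerivAt_halfPowIntegrand (hIoc ht) ((mem_ball_zero_iff.1 hw).trans hR))
  exact hderiv.2.differentiableAt.differentiableWithinAt

end Holomorphy

/-- There is a function `Ĝ`, analytic on `B(1,1)` and real on real points,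
with `φ_←(z) = (4/3)(z−1)^{3/2}(1 + (z−1)Ĝ(z))` off the cut `(−∞,1]`. -/
theorem stmt_2 :
    ∃ G : ℂ → ℂ, DifferentiableOn ℂ G (ball (1 : ℂ) 1) ∧
      (∀ x : ℝ, (x : ℂ) ∈ ball (1 : ℂ) 1 → (G x).im = 0) ∧
      ∀ z ∈ ball (1 : ℂ) 1, z ∉ (Complex.ofReal '' Set.Iic 1) →
        phiLeft z = (4/3 : ℂ) * (z - 1) ^ ((3 : ℂ)/2) * (1 + (z - 1) * G z) := by
  set g : ℂ → ℂ := fun z => 3 / 2 * halfPowIntegral (z - 1) - 1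
  have hg : DifferentiableOn ℂ g (ball 1 1) :=
    ((differentiableOn_halfPowIntegral.comp (differentiableOn_id.sub_const 1)
      fun z hz => by simpa [dist_eq_norm] using hz).const_mul _).sub_const 1
  have hg_real : ∀ x : ℝ, (x : ℂ) ∈ ball ((1 : ℝ) : ℂ) 1 → (g x).im = 0 := by
    intro x hx
    rw [mem_ball, dist_eq_norm, ← ofReal_sub, norm_real, Real.norm_eq_abs] at hx
    simpa [g] using halfPowIntegral_ofReal_im (x := x - 1) (by linarith [abs_lt.1 hx])
  have hg_one : g 1 = 0 := by simp [g, halfPowIntegral_zero]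
  have hG_diff : DifferentiableOn ℂ (dslope g 1) (ball 1 1) :=
    (differentiableOn_dslope (isOpen_ball.mem_nhds (mem_ball_self one_pos))).2 hg
  have hG_real : ∀ x : ℝ, (x : ℂ) ∈ ball (1 : ℂ) 1 → (dslope g 1 x).im = 0 := fun x hx => by
    simpa using dslope_ofReal_im_eq_zero (c := 1) (by simpa using hg) hg_real (by simpa using hx)
  refine ⟨dslope g 1, hG_diff, hG_real, fun z _ _ => ?_⟩
  have hslope : (z - 1) * dslope g 1 z = 3 / 2 * halfPowIntegral (z - 1) - 1 := by
    simpa [hg_one] using sub_smul_dslope g 1 z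
  rw [phiLeft_eq, hslope]
  ring
end

section
/- Let z, w ∈ ℂ and γ ∈ ℝ satisfy w² = z(z−1) and 1 + (z − 1/2)/w = −γ². Then z is real, i.e. Im z = 0. -/
open Complex

/-- If `w² = z(z−1)` and `1 + (z − 1/2)/w = −γ²` for a real `γ`, then
`z` is real. -/
theorem stmt_7 (z w : ℂ) (γ : ℝ) (h1 : w ^ 2 = z * (z - 1))
    (h2 : 1 + (z - 1/2) / w = -((γ : ℂ)) ^ 2) : z.im = 0 := by
  set c : ℝ := 1 + γ ^ 2 with hcdef
  have hcc : (c : ℂ) = 1 + (γ : ℂ) ^ 2 := by rw [hcdef]; push_cast; ring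
  have hw : w ≠ 0 := by
    intro h
    rw [h, div_zero, add_zero] at h2
    have h2' : ((1 : ℝ) : ℂ) = ((-γ ^ 2 : ℝ) : ℂ) := by push_cast; linear_combination h2
    have := Complex.ofReal_inj.mp h2'
    nlinarith [sq_nonneg γ]
  have hc : z - 1/2 = -(c : ℂ) * w := by
    rw [hcc]
    field_simp at h2
    linear_combination (1/2 : ℂ) * h2
  have hsq : (z - 1/2) ^ 2 = (c : ℂ) ^ 2 * (z * (z - 1)) := by
    rw [hc, mul_pow, h1]; ring
  have key : (z - 1/2) ^ 2 * (1 - (c : ℂ) ^ 2) = -(c : ℂ) ^ 2 / 4 := by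
    linear_combination hsq
  have h1c : (1 : ℝ) ≤ c ^ 2 := by nlinarith [sq_nonneg γ]
  rcases h1c.lt_or_eq with hlt | heq
  · set r : ℝ := c ^ 2 / (4 * (c ^ 2 - 1)) with hrdef
    have hr : 0 < r := by
      apply div_pos
      · nlinarith
      · nlinarith
    have hr4 : r * (4 * (c ^ 2 - 1)) = c ^ 2 := by
      have hnz : 4 * (c ^ 2 - 1) ≠ 0 := by nlinarith
      rw [hrdef]; field_simp
    have hr4' : (r : ℂ) * (4 * ((c : ℂ) ^ 2 - 1)) = (c : ℂ) ^ 2 := by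
      exact_mod_cast hr4
    have hne' : (4 : ℂ) * ((c : ℂ) ^ 2 - 1) ≠ 0 := by
      intro h
      have h' : ((4 * (c ^ 2 - 1) : ℝ) : ℂ) = ((0 : ℝ) : ℂ) := by push_cast; linear_combination h
      have := Complex.ofReal_inj.mp h'
      nlinarith
    have hz2 : (z - 1/2) ^ 2 = (r : ℂ) := by
      apply mul_right_cancel₀ hne'
      linear_combination (-4 : ℂ) * key - hr4'
    have him := congrArg Complex.im hz2
    have hre := congrArg Complex.re hz2
    simp [pow_two, Complex.mul_im, Complex.mul_re, Complex.sub_im, Complex.sub_re] at him hre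
    by_contra hb
    have hb2 : 0 < z.im ^ 2 := by positivity
    have ha : z.re - 1/2 = 0 ∨ z.im = 0 := by
      rcases mul_eq_zero.mp (by nlinarith [him] : (z.re - 1/2) * z.im = 0) with h | h
      · left; linarith
      · right; exact h
    rcases ha with h | h
    · nlinarith [hre]
    · exact hb h
  · have hceq : ((c : ℂ)) ^ 2 = 1 := by
      norm_cast
      exact heq.symm
    rw [hceq] at key
    norm_num at key
end
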